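/- arXiv:1003.2372 — 2 statements merged into one kernel-verified Lean document; each statement's English description precedes it below -/
import Mathlib

section
/- Let A be an n×n Hermitian positive definite matrix and a ∈ ℂⁿ a vector. If the Hermitian matrix a a† − A has a positive eigenvalue, then 0 is not an eigenvalue of a a† − A and all eigenvalues of a a† − A except exactly one are negative; i.e., a a† − A has exactly one positive eigenvalue and n−1 negative eigenvalues. -/
/-!
On the hyperplane `a† x = 0` the quadratic form of `a a† - A` agrees with that of `-A`, so it is
negative definite there. Two orthonormal eigenvectors with nonnegative eigenvalues would span a
plane on which the form is nonnegative, and that plane meets the hyperplane in a nonzero vector.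
Hence at most one eigenvalue is nonnegative, and by hypothesis that one is positive.
-/

open scoped ComplexOrder

namespace Matrix

variable {𝕜 ι : Type*} [RCLike 𝕜] [Fintype ι]

theorem PosDef.dotProduct_vecMulVec_sub_mulVec_neg {A : Matrix ι ι 𝕜} (hA : A.PosDef)
    (a : ι → 𝕜) {x : ι → 𝕜} (hx : x ≠ 0) (hax : star a ⬝ᵥ x = 0) :
    star x ⬝ᵥ ((vecMulVec a (star a) - A) *ᵥ x) < 0 := by
  rw [sub_mulVec, vecMulVec_mulVec, hax, MulOpposite.op_zero, zero_smul, zero_sub,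
    dotProduct_neg, neg_neg_iff_pos]
  exact hA.dotProduct_mulVec_pos hx

namespace IsHermitian

variable [DecidableEq ι] {M : Matrix ι ι 𝕜} (hM : M.IsHermitian)

theorem star_eigenvectorBasis_dotProduct (i j : ι) :
    star ⇑(hM.eigenvectorBasis i) ⬝ᵥ ⇑(hM.eigenvectorBasis j) = if i = j then 1 else 0 := by
  rw [dotProduct_comm, ← EuclideanSpace.inner_eq_star_dotProduct,
    hM.eigenvectorBasis.inner_eq_ite]

theorem dotProduct_mulVec_smul_add_smul_eigenvectorBasis {i j : ι} (hij : i ≠ j) (c d : 𝕜) :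
    star (c • ⇑(hM.eigenvectorBasis i) + d • ⇑(hM.eigenvectorBasis j)) ⬝ᵥ
        (M *ᵥ (c • ⇑(hM.eigenvectorBasis i) + d • ⇑(hM.eigenvectorBasis j))) =
      star c * c * hM.eigenvalues i + star d * d * hM.eigenvalues j := by
  simp only [mulVec_add, mulVec_smul, mulVec_eigenvectorBasis, star_add, star_smul,
    add_dotProduct, dotProduct_add, smul_dotProduct, dotProduct_smul,
    star_eigenvectorBasis_dotProduct, hij, hij.symm, if_true, if_false, smul_eq_mul,
    RCLike.real_smul_eq_coe_mul, mul_one, mul_zero, add_zero, zero_add]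
  ring

theorem dotProduct_mulVec_smul_add_smul_eigenvectorBasis_nonneg {i j : ι} (hij : i ≠ j)
    (hi : 0 ≤ hM.eigenvalues i) (hj : 0 ≤ hM.eigenvalues j) (c d : 𝕜) :
    0 ≤ star (c • ⇑(hM.eigenvectorBasis i) + d • ⇑(hM.eigenvectorBasis j)) ⬝ᵥ
        (M *ᵥ (c • ⇑(hM.eigenvectorBasis i) + d • ⇑(hM.eigenvectorBasis j))) := by
  rw [hM.dotProduct_mulVec_smul_add_smul_eigenvectorBasis hij]
  have hi' : (0 : 𝕜) ≤ hM.eigenvalues i := by exact_mod_cast hi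
  have hj' : (0 : 𝕜) ≤ hM.eigenvalues j := by exact_mod_cast hj
  exact add_nonneg (mul_nonneg (star_mul_self_nonneg c) hi')
    (mul_nonneg (star_mul_self_nonneg d) hj')

theorem smul_add_smul_eigenvectorBasis_ne_zero {i j : ι} (hij : i ≠ j) {c d : 𝕜}
    (hcd : c ≠ 0 ∨ d ≠ 0) :
    c • ⇑(hM.eigenvectorBasis i) + d • ⇑(hM.eigenvectorBasis j) ≠ 0 := by
  intro h
  have hc := congrArg (star ⇑(hM.eigenvectorBasis i) ⬝ᵥ ·) h
  have hd := congrArg (star ⇑(hM.eigenvectorBasis j) ⬝ᵥ ·) h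
  simp only [dotProduct_add, dotProduct_smul, star_eigenvectorBasis_dotProduct, hij, hij.symm,
    if_true, if_false, smul_eq_mul, mul_one, mul_zero, add_zero, zero_add, dotProduct_zero] at hc hd
  tauto

theorem subsingleton_setOf_eigenvalues_nonneg {b : ι → 𝕜}
    (hneg : ∀ x, x ≠ 0 → b ⬝ᵥ x = 0 → star x ⬝ᵥ (M *ᵥ x) < 0) :
    {i | 0 ≤ hM.eigenvalues i}.Subsingleton := by
  intro i hi j hj
  by_contra hij
  set p := b ⬝ᵥ ⇑(hM.eigenvectorBasis i)
  set q := b ⬝ᵥ ⇑(hM.eigenvectorBasis j)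
  obtain ⟨c, d, hcd, hker⟩ : ∃ c d : 𝕜, (c ≠ 0 ∨ d ≠ 0) ∧ c * p + d * q = 0 := by
    by_cases hp : p = 0
    · exact ⟨1, 0, Or.inl one_ne_zero, by simp [hp]⟩
    · exact ⟨q, -p, Or.inr (neg_ne_zero.mpr hp), by ring⟩
  refine (hneg _ (hM.smul_add_smul_eigenvectorBasis_ne_zero hij hcd) ?_).not_ge
    (hM.dotProduct_mulVec_smul_add_smul_eigenvectorBasis_nonneg hij hi hj c d)
  simpa only [dotProduct_add, dotProduct_smul, smul_eq_mul] using hker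

end IsHermitian

end Matrix

theorem stmt1 {n : ℕ} (A : Matrix (Fin n) (Fin n) ℂ) (hA : A.PosDef)
    (a : Fin n → ℂ)
    (hM : (Matrix.vecMulVec a (star a) - A).IsHermitian)
    (hpos : ∃ i, 0 < hM.eigenvalues i) :
    (∃! i, 0 < hM.eigenvalues i) ∧ (∀ i, hM.eigenvalues i ≠ 0) := by
  have hsub := hM.subsingleton_setOf_eigenvalues_nonneg fun x hx hax =>
    hA.dotProduct_vecMulVec_sub_mulVec_neg a hx hax
  obtain ⟨i, hi⟩ := hpos
  refine ⟨⟨i, hi, fun j hj => hsub hj.le hi.le⟩, fun j hj => ?_⟩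
  have hji : j = i := hsub hj.ge hi.le
  exact hi.ne' (hji ▸ hj)
end

section
/- For distinct positive reals a ≠ b, ∫₀^∞ e^{−t}/((1+ta)(1+tb)) dt = (F₁(a) − F₁(b))/(a − b), where F₁(x) = e^{1/x} E₁(1/x) and E₁ is the exponential integral. -/
open Set MeasureTheory Real

/-
Since `1 / ((1 + t a)(1 + t b)) = (a - b)⁻¹ (1 / (t + 1/a) - 1 / (t + 1/b))`, the integral splits
into two integrals `∫₀^∞ e^{-t} / (t + s) dt`, and the substitution `u = t + s` turns each into
`e^s E₁(s)`, which is `F₁(x)` for `s = 1/x`.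
-/

/-- The exponential integral `E₁ x = ∫ₓ^∞ e^{-t}/t dt`. -/
noncomputable def expIntE1 (x : ℝ) : ℝ := ∫ t in Set.Ioi x, Real.exp (-t) / t

/-- `F₁ x = e^{1/x} E₁(1/x)`. -/
noncomputable def F1 (x : ℝ) : ℝ := Real.exp (1 / x) * expIntE1 (1 / x)

theorem integrableOn_exp_neg_div_add {s : ℝ} (hs : 0 < s) :
    IntegrableOn (fun t : ℝ => exp (-t) / (t + s)) (Ioi 0) := by
  refine ((exp_neg_integrableOn_Ioi 0 one_pos).div_const s).mono'
    (by fun_prop : Measurable fun t : ℝ => exp (-t) / (t + s)).aestronglyMeasurable ?_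
  filter_upwards [ae_restrict_mem measurableSet_Ioi] with t (ht : 0 < t)
  rw [norm_of_nonneg (by positivity), neg_one_mul]
  exact div_le_div_of_nonneg_left (exp_pos _).le hs (by linarith)

theorem integral_exp_neg_div_add (s : ℝ) :
    ∫ t in Ioi (0 : ℝ), exp (-t) / (t + s) = exp s * expIntE1 s := by
  have hsubst := (measurePreserving_add_right (volume : Measure ℝ) s).setIntegral_preimage_emb
    (measurableEmbedding_addRight s) (fun u => exp (-u) / u) (Ioi s)
  have hpre : (· + s) ⁻¹' Ioi s = Ioi (0 : ℝ) := by
    ext t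
    simp
  simp only [hpre, neg_add, exp_add, mul_div_right_comm, integral_mul_const] at hsubst
  rw [expIntE1, ← hsubst, mul_comm, mul_assoc, ← exp_add]
  simp

theorem integral_exp_neg_div_add_inv (x : ℝ) :
    ∫ t in Ioi (0 : ℝ), exp (-t) / (t + x⁻¹) = F1 x := by
  rw [integral_exp_neg_div_add, F1, one_div]

theorem div_mul_eq_sub_div_add_inv {a b t : ℝ} (c : ℝ) (ha : a ≠ 0) (hb : b ≠ 0) (hab : a ≠ b)
    (hta : 1 + t * a ≠ 0) (htb : 1 + t * b ≠ 0) :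
    c / ((1 + t * a) * (1 + t * b)) = (a - b)⁻¹ * (c / (t + a⁻¹) - c / (t + b⁻¹)) := by
  have hta' : t + a⁻¹ = (1 + t * a) / a := by field_simp; ring
  have htb' : t + b⁻¹ = (1 + t * b) / b := by field_simp; ring
  rw [hta', htb']
  field_simp
  ring

theorem stmt5 (a b : ℝ) (ha : 0 < a) (hb : 0 < b) (hab : a ≠ b) :
    ∫ t in Set.Ioi (0 : ℝ), Real.exp (-t) / ((1 + t * a) * (1 + t * b)) =
      (F1 a - F1 b) / (a - b) := by
  have hsplit : ∀ t ∈ Ioi (0 : ℝ), exp (-t) / ((1 + t * a) * (1 + t * b)) =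
      (a - b)⁻¹ * (exp (-t) / (t + a⁻¹) - exp (-t) / (t + b⁻¹)) := fun t (ht : 0 < t) =>
    div_mul_eq_sub_div_add_inv _ ha.ne' hb.ne' hab (by positivity) (by positivity)
  rw [setIntegral_congr_fun measurableSet_Ioi hsplit, integral_const_mul,
    integral_sub (integrableOn_exp_neg_div_add (inv_pos.mpr ha))
      (integrableOn_exp_neg_div_add (inv_pos.mpr hb)),
    integral_exp_neg_div_add_inv a, integral_exp_neg_div_add_inv b, inv_mul_eq_div]
end
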